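/- arXiv:1805.09450 — 2 statements merged into one kernel-verified Lean document; each statement's English description precedes it below -/
import Mathlib

section
/- For every u ≤ 0, √(2/π) · (1/(−u + √(u²+4))) · e^{−u²/2} ≤ Ψ(u), where Ψ(u) = (1/√(2π)) ∫_{−∞}^u e^{−t²/2} dt is the standard normal CDF. -/
open Real MeasureTheory

/-- The standard normal cumulative distribution function. -/
noncomputable def stdNormalCDF (v : ℝ) : ℝ :=
  (Real.sqrt (2 * Real.pi))⁻¹ * ∫ t in Set.Iic v, Real.exp (-t ^ 2 / 2)

open Filter Set Topology

/-!
Rationalising, `1 / (-u + √(u² + 4)) = (u + √(u² + 4)) / 4`, so the claim says that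
`L u := (u + √(u² + 4)) / 2 · e^{-u²/2}` is at most `∫_{-∞}^u e^{-t²/2} dt`.
The difference of the two sides is monotone, because `L' ≤ e^{-u²/2}`; this reduces to
`(u² + 4)(u² + 1)² - u²(u² + 3)² = 4 > 0`. Moreover `L u ≤ e^{-u²/2} → 0` as `u → -∞`
while the integral stays nonnegative, so the difference is nonnegative everywhere.
-/

theorem hasDerivAt_setIntegral_Iic {E : Type*} [NormedAddCommGroup E] [NormedSpace ℝ E]
    [CompleteSpace E] {f : ℝ → E} {u : ℝ} (hf : Integrable f) (hfu : ContinuousAt f u) :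
    HasDerivAt (fun v => ∫ t in Iic v, f t) (f u) u := by
  have hsplit : ∀ v, ∫ t in Iic v, f t = (∫ t in Iic 0, f t) + ∫ t in (0 : ℝ)..v, f t := fun v =>
    eq_add_of_sub_eq' (intervalIntegral.integral_Iic_sub_Iic hf.integrableOn hf.integrableOn)
  rw [show (fun v => ∫ t in Iic v, f t) = _ from funext hsplit]
  exact (intervalIntegral.integral_hasDerivAt_right hf.intervalIntegrable
    hf.aestronglyMeasurable.stronglyMeasurableAtFilter hfu).const_add _

lemma integrable_exp_neg_sq_div_two : Integrable fun t : ℝ => exp (-t ^ 2 / 2) := by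
  simpa [neg_div, div_eq_inv_mul] using integrable_exp_neg_mul_sq (b := 1 / 2) (by norm_num)

lemma tendsto_exp_neg_sq_div_two_atBot : Tendsto (fun t : ℝ => exp (-t ^ 2 / 2)) atBot (𝓝 0) := by
  have hsq : Tendsto (fun t : ℝ => -t ^ 2 / 2) atBot atBot := by
    have := ((tendsto_pow_atTop two_ne_zero).comp tendsto_neg_atBot_atTop).atTop_div_const
      (zero_lt_two' ℝ)
    simpa [Function.comp_def, neg_div] using tendsto_neg_atTop_atBot.comp this
  exact tendsto_exp_atBot.comp hsq

lemma hasDerivAt_exp_neg_sq_div_two (u : ℝ) :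
    HasDerivAt (fun v : ℝ => exp (-v ^ 2 / 2)) (exp (-u ^ 2 / 2) * -u) u :=
  (((hasDerivAt_pow 2 u).neg.div_const 2).congr_deriv (by norm_num; ring)).exp

lemma hasDerivAt_sqrt_sq_add_four (u : ℝ) :
    HasDerivAt (fun v : ℝ => √(v ^ 2 + 4)) (u / √(u ^ 2 + 4)) u := by
  convert ((hasDerivAt_pow 2 u).add_const 4).sqrt (by positivity) using 1
  field_simp
  push_cast
  ring

lemma one_div_neg_add_sqrt_sq_add_four (u : ℝ) :
    1 / (-u + √(u ^ 2 + 4)) = (u + √(u ^ 2 + 4)) / 4 := by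
  have hs : √(u ^ 2 + 4) ^ 2 = u ^ 2 + 4 := sq_sqrt (by positivity)
  have hpos : 0 < -u + √(u ^ 2 + 4) := by nlinarith [sqrt_nonneg (u ^ 2 + 4)]
  rw [div_eq_div_iff hpos.ne' (by norm_num)]
  nlinarith

lemma one_add_div_sqrt_sub_mul_add_sqrt_le_two (u : ℝ) :
    1 + u / √(u ^ 2 + 4) - u * (u + √(u ^ 2 + 4)) ≤ 2 := by
  set s := √(u ^ 2 + 4)
  have hs : s ^ 2 = u ^ 2 + 4 := sq_sqrt (by positivity)
  have hpos : 0 < s := by positivity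
  have hdiff : (s * (u ^ 2 + 1) + u * (u ^ 2 + 3)) * (s * (u ^ 2 + 1) - u * (u ^ 2 + 3)) = 4 := by
    linear_combination (u ^ 2 + 1) ^ 2 * hs
  have hnum : 0 ≤ s * (u ^ 2 + 1) + u * (u ^ 2 + 3) := by
    nlinarith [mul_pos hpos (by positivity : (0 : ℝ) < u ^ 2 + 1)]
  have hgap : 2 - (1 + u / s - u * (u + s)) = (s * (u ^ 2 + 1) + u * (u ^ 2 + 3)) / s := by
    field_simp
    linear_combination u * hs
  rw [← sub_nonneg, hgap]
  positivity

noncomputable def gaussLowerBound (u : ℝ) : ℝ := (u + √(u ^ 2 + 4)) / 2 * exp (-u ^ 2 / 2)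

lemma hasDerivAt_gaussLowerBound (u : ℝ) : HasDerivAt gaussLowerBound
    ((1 + u / √(u ^ 2 + 4) - u * (u + √(u ^ 2 + 4))) / 2 * exp (-u ^ 2 / 2)) u := by
  have hlin : HasDerivAt (fun v : ℝ => (v + √(v ^ 2 + 4)) / 2) ((1 + u / √(u ^ 2 + 4)) / 2) u :=
    ((hasDerivAt_id' u).add (hasDerivAt_sqrt_sq_add_four u)).div_const 2
  exact (hlin.mul (hasDerivAt_exp_neg_sq_div_two u)).congr_deriv (by ring)

lemma gaussLowerBound_le_exp {u : ℝ} (hu : u ≤ 0) : gaussLowerBound u ≤ exp (-u ^ 2 / 2) := by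
  have hs : √(u ^ 2 + 4) ≤ 2 - u := sqrt_le_iff.mpr ⟨by linarith, by nlinarith⟩
  unfold gaussLowerBound
  exact mul_le_of_le_one_left (exp_pos _).le (by linarith)

lemma monotone_integral_Iic_sub_gaussLowerBound :
    Monotone fun v => (∫ t in Iic v, exp (-t ^ 2 / 2)) - gaussLowerBound v := by
  refine monotone_of_hasDerivAt_nonneg (fun u => (hasDerivAt_setIntegral_Iic
    integrable_exp_neg_sq_div_two (by fun_prop)).sub (hasDerivAt_gaussLowerBound u)) fun u => ?_
  have := one_add_div_sqrt_sub_mul_add_sqrt_le_two u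
  have := exp_pos (-u ^ 2 / 2)
  simp only [Pi.zero_apply, sub_nonneg]
  nlinarith

theorem gaussLowerBound_le_integral_Iic (u : ℝ) :
    gaussLowerBound u ≤ ∫ t in Iic u, exp (-t ^ 2 / 2) := by
  rw [← sub_nonneg]
  have hlim : Tendsto (fun v : ℝ => -exp (-v ^ 2 / 2)) atBot (𝓝 0) := by
    simpa using tendsto_exp_neg_sq_div_two_atBot.neg
  refine le_of_tendsto hlim ?_
  filter_upwards [eventually_le_atBot (min u 0)] with v hv
  have hint : 0 ≤ ∫ t in Iic v, exp (-t ^ 2 / 2) :=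
    setIntegral_nonneg measurableSet_Iic fun t _ => (exp_pos _).le
  have hbound := gaussLowerBound_le_exp (hv.trans (min_le_right u 0))
  have hmono := monotone_integral_Iic_sub_gaussLowerBound (hv.trans (min_le_left u 0))
  simp only at hmono
  linarith

theorem stdNormalCDF_lower_bound_general (u : ℝ) :
    Real.sqrt (2 / Real.pi) * (1 / (-u + Real.sqrt (u ^ 2 + 4))) * Real.exp (-u ^ 2 / 2)
      ≤ stdNormalCDF u := by
  have hsqrt : √(2 / π) = 2 * (√(2 * π))⁻¹ := by
    rw [sqrt_div zero_le_two, sqrt_mul zero_le_two, mul_inv, ← mul_assoc, ← div_eq_mul_inv 2,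
      div_sqrt, div_eq_mul_inv]
  have hlhs : √(2 / π) * (1 / (-u + √(u ^ 2 + 4))) * exp (-u ^ 2 / 2)
      = (√(2 * π))⁻¹ * gaussLowerBound u := by
    rw [hsqrt, one_div_neg_add_sqrt_sq_add_four, gaussLowerBound]
    ring
  rw [hlhs, stdNormalCDF]
  exact mul_le_mul_of_nonneg_left (gaussLowerBound_le_integral_Iic u) (by positivity)

/-- Lower bound on the standard Gaussian CDF for nonpositive arguments
(inequality 7.1.13 of Abramowitz–Stegun). -/
theorem stdNormalCDF_lower_bound (u : ℝ) (hu : u ≤ 0) :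
    Real.sqrt (2 / Real.pi) * (1 / (-u + Real.sqrt (u ^ 2 + 4))) * Real.exp (-u ^ 2 / 2)
      ≤ stdNormalCDF u :=
  stdNormalCDF_lower_bound_general u
end

section
/- Let ν₀ be a probability measure on C(Ω;ℝ) and fix x₁,…,x_m ∈ Ω, y_j ∈ {±1}, with ν₀({u : u(x_j)=0 for some j}) = 0 and ν₀(B) > 0 for B = {u : y_j u(x_j) > 0 ∀j}. For γ > 0 let Φ_γ^p(u) = −Σ_j log Ψ(y_j u(x_j)/γ), with Ψ the standard normal CDF, and ν_γ^p(du) = (Z_γ^p)^{−1} e^{−Φ_γ^p(u)} ν₀(du). Then ν_γ^p converges weakly to ν(du) = ν₀(B)^{−1} 1_B(u) ν₀(du) as γ → 0. -/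
open MeasureTheory Filter Topology

/-- The probit misfit `Φ_γ^p(u) = −∑_j log Ψ(y_j u(x_j)/γ)`. -/
noncomputable def probitMisfit {Ω : Type*} [TopologicalSpace Ω]
    {m : ℕ} (x : Fin m → Ω) (y : Fin m → ℝ) (γ : ℝ) (u : C(Ω, ℝ)) : ℝ :=
  -∑ j, Real.log (stdNormalCDF (y j * u (x j) / γ))

/-!
As `γ → 0⁺`, `Ψ(t/γ)` tends to the indicator of `t > 0` (`Ψ` is the CDF of `gaussianReal 0 1`, so
its limits at `±∞` are known). Hence for `ν₀`-almost every `u` (no `u(x_j)` vanishes) the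
likelihood `e^{-Φ_γ^p(u)} = ∏_j Ψ(y_j u(x_j)/γ)` tends to `1_B(u)`. Being bounded by `1`, it
allows dominated convergence both in the normalising constant, `Z_γ^p → ν₀(B) > 0`, and in
`∫ g e^{-Φ_γ^p} dν₀ → ∫_B g dν₀`; the quotient of the two is `∫ g dν_γ^p`.
-/

open ProbabilityTheory

theorem stdNormalCDF_eq_cdf_gaussianReal : stdNormalCDF = cdf (gaussianReal 0 1) := by
  ext v
  rw [cdf_eq_real, measureReal_def, gaussianReal_apply_eq_integral 0 one_ne_zero,
    ENNReal.toReal_ofReal (setIntegral_nonneg measurableSet_Iic fun t _ =>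
      gaussianPDFReal_nonneg 0 1 t), stdNormalCDF, gaussianPDFReal_def, integral_const_mul]
  simp

theorem stdNormalCDF_pos (v : ℝ) : 0 < stdNormalCDF v := by
  rw [stdNormalCDF_eq_cdf_gaussianReal, cdf_eq_real, measureReal_def]
  refine ENNReal.toReal_pos (fun h => ?_) (measure_ne_top _ _)
  have := gaussianReal_absolutelyContinuous' 0 one_ne_zero h
  simp at this

theorem tendsto_stdNormalCDF_div_nhdsGT {a : ℝ} (ha : a ≠ 0) :
    Tendsto (fun γ => stdNormalCDF (a / γ)) (𝓝[>] 0) (𝓝 ((Set.Ioi 0).indicator 1 a)) := by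
  rw [stdNormalCDF_eq_cdf_gaussianReal]
  simp_rw [div_eq_mul_inv]
  rcases ha.lt_or_gt with ha | ha
  · rw [Set.indicator_of_notMem (Set.notMem_Ioi.2 ha.le)]
    exact (tendsto_cdf_atBot _).comp (tendsto_inv_nhdsGT_zero.const_mul_atTop_of_neg ha)
  · rw [Set.indicator_of_mem (Set.mem_Ioi.2 ha), Pi.one_apply]
    exact (tendsto_cdf_atTop _).comp (tendsto_inv_nhdsGT_zero.const_mul_atTop ha)

theorem stdNormalCDF_le_one (v : ℝ) : stdNormalCDF v ≤ 1 := by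
  rw [stdNormalCDF_eq_cdf_gaussianReal]
  exact cdf_le_one _ v

theorem measurable_stdNormalCDF : Measurable stdNormalCDF := by
  rw [stdNormalCDF_eq_cdf_gaussianReal]
  exact (monotone_cdf _).measurable

section NormalizedDensity

variable {α ι : Type*} [MeasurableSpace α] {μ : Measure α} {l : Filter ι} {F : ι → α → ℝ}
  {B : Set α} {g : α → ℝ} {M : ℝ}

theorem tendsto_integral_mul_of_tendsto_indicator [IsFiniteMeasure μ] [l.IsCountablyGenerated]
    (hB : MeasurableSet B) (hF : ∀ γ, AEStronglyMeasurable (F γ) μ)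
    (hF1 : ∀ γ u, |F γ u| ≤ 1) (hg : AEStronglyMeasurable g μ) (hgM : ∀ u, |g u| ≤ M)
    (hlim : ∀ᵐ u ∂μ, Tendsto (fun γ => F γ u) l (𝓝 (B.indicator 1 u))) :
    Tendsto (fun γ => ∫ u, F γ u * g u ∂μ) l (𝓝 (∫ u in B, g u ∂μ)) := by
  rw [← integral_indicator hB]
  refine tendsto_integral_filter_of_dominated_convergence (fun _ => M)
    (.of_forall fun γ => (hF γ).mul hg) (.of_forall fun γ => .of_forall fun u => ?_)
    (integrable_const M) ?_
  · rw [Real.norm_eq_abs, abs_mul]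
    exact (mul_le_of_le_one_left (abs_nonneg _) (hF1 γ u)).trans (hgM u)
  · filter_upwards [hlim] with u hu
    convert hu.mul_const (g u) using 2
    by_cases hu : u ∈ B <;> simp [hu]

theorem integral_normalized_withDensity {f : α → ℝ} (hf : AEStronglyMeasurable f μ)
    (hf0 : ∀ u, 0 ≤ f u) (g : α → ℝ) :
    ∫ u, g u ∂((ENNReal.ofReal (∫ u, f u ∂μ))⁻¹ • μ.withDensity (fun u => ENNReal.ofReal (f u)))
      = (∫ u, f u ∂μ)⁻¹ * ∫ u, f u * g u ∂μ := by
  rw [integral_smul_measure, integral_withDensity_eq_integral_toReal_smul₀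
    hf.aemeasurable.ennreal_ofReal (.of_forall fun _ => ENNReal.ofReal_lt_top),
    ENNReal.toReal_inv, ENNReal.toReal_ofReal (integral_nonneg hf0), smul_eq_mul]
  simp_rw [ENNReal.toReal_ofReal (hf0 _), smul_eq_mul]

theorem tendsto_integral_normalized_withDensity [IsFiniteMeasure μ] [l.IsCountablyGenerated]
    (hB : MeasurableSet B) (hμB : μ B ≠ 0) (hF : ∀ γ, AEStronglyMeasurable (F γ) μ)
    (hF0 : ∀ γ u, 0 ≤ F γ u) (hF1 : ∀ γ u, F γ u ≤ 1)
    (hlim : ∀ᵐ u ∂μ, Tendsto (fun γ => F γ u) l (𝓝 (B.indicator 1 u)))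
    (hg : AEStronglyMeasurable g μ) (hgM : ∀ u, |g u| ≤ M) :
    Tendsto (fun γ => ∫ u, g u ∂((ENNReal.ofReal (∫ u, F γ u ∂μ))⁻¹ •
        μ.withDensity (fun u => ENNReal.ofReal (F γ u))))
      l (𝓝 (∫ u, g u ∂((μ B)⁻¹ • μ.restrict B))) := by
  have hF1' : ∀ γ u, |F γ u| ≤ 1 := fun γ u => (abs_of_nonneg (hF0 γ u)).trans_le (hF1 γ u)
  have hZ : Tendsto (fun γ => ∫ u, F γ u ∂μ) l (𝓝 (μ.real B)) := by
    simpa using tendsto_integral_mul_of_tendsto_indicator (g := 1) (M := 1) hB hF hF1'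
      aestronglyMeasurable_const (fun _ => by simp) hlim
  have hμB' : μ.real B ≠ 0 := (measureReal_ne_zero_iff (measure_ne_top μ B)).2 hμB
  simp_rw [integral_normalized_withDensity (hF _) (hF0 _), integral_smul_measure,
    ENNReal.toReal_inv, smul_eq_mul]
  exact (hZ.inv₀ hμB').mul (tendsto_integral_mul_of_tendsto_indicator hB hF hF1' hg hgM hlim)

end NormalizedDensity

section Probit

variable {Ω : Type*} [TopologicalSpace Ω] {m : ℕ} {x : Fin m → Ω} {y : Fin m → ℝ}

theorem exp_neg_probitMisfit (γ : ℝ) (u : C(Ω, ℝ)) :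
    Real.exp (-probitMisfit x y γ u) = ∏ j, stdNormalCDF (y j * u (x j) / γ) := by
  simp only [probitMisfit, neg_neg, Real.exp_sum, Real.exp_log (stdNormalCDF_pos _)]

theorem exp_neg_probitMisfit_le_one (γ : ℝ) (u : C(Ω, ℝ)) :
    Real.exp (-probitMisfit x y γ u) ≤ 1 := by
  rw [exp_neg_probitMisfit]
  exact Finset.prod_le_one (fun j _ => (stdNormalCDF_pos _).le) fun j _ => stdNormalCDF_le_one _

theorem measurable_exp_neg_probitMisfit [MeasurableSpace C(Ω, ℝ)] [OpensMeasurableSpace C(Ω, ℝ)]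
    (γ : ℝ) : Measurable fun u : C(Ω, ℝ) => Real.exp (-probitMisfit x y γ u) := by
  simp_rw [exp_neg_probitMisfit]
  exact Finset.measurable_prod _ fun j _ =>
    measurable_stdNormalCDF.comp (Continuous.measurable (by fun_prop))

theorem tendsto_exp_neg_probitMisfit {u : C(Ω, ℝ)} (hu : ∀ j, y j * u (x j) ≠ 0) :
    Tendsto (fun γ => Real.exp (-probitMisfit x y γ u)) (𝓝[>] 0)
      (𝓝 ({u : C(Ω, ℝ) | ∀ j, y j * u (x j) > 0}.indicator 1 u)) := by
  simp_rw [exp_neg_probitMisfit]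
  convert tendsto_finsetProd Finset.univ fun j _ => tendsto_stdNormalCDF_div_nhdsGT (hu j)
  by_cases hB : u ∈ {u : C(Ω, ℝ) | ∀ j, y j * u (x j) > 0}
  · simp [Set.indicator_of_mem hB, Set.indicator_of_mem (Set.mem_Ioi.2 (hB _))]
  · obtain ⟨j, hj⟩ : ∃ j, ¬ 0 < y j * u (x j) := by simpa using hB
    rw [Set.indicator_of_notMem hB,
      Finset.prod_eq_zero (Finset.mem_univ j) (Set.indicator_of_notMem hj 1)]

end Probit

theorem probit_small_noise_limit_general
    {Ω : Type*} [TopologicalSpace Ω]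
    [MeasurableSpace C(Ω, ℝ)] [BorelSpace C(Ω, ℝ)]
    (ν₀ : Measure C(Ω, ℝ)) [IsProbabilityMeasure ν₀]
    (m : ℕ) (x : Fin m → Ω) (y : Fin m → ℝ)
    (hzero : ν₀ {u : C(Ω, ℝ) | ∃ j, u (x j) = 0} = 0)
    (B : Set C(Ω, ℝ)) (hB : B = {u : C(Ω, ℝ) | ∀ j, y j * u (x j) > 0})
    (hBpos : 0 < ν₀ B)
    (νγ : ℝ → Measure C(Ω, ℝ))
    (hνγ : ∀ γ : ℝ, 0 < γ →
      νγ γ = (ENNReal.ofReal (∫ u, Real.exp (-(probitMisfit x y γ u)) ∂ν₀))⁻¹ •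
        ν₀.withDensity (fun u => ENNReal.ofReal (Real.exp (-(probitMisfit x y γ u)))))
    (ν : Measure C(Ω, ℝ)) (hν : ν = (ν₀ B)⁻¹ • ν₀.restrict B) :
    ∀ g : C(Ω, ℝ) → ℝ, Continuous g → (∃ M, ∀ u, |g u| ≤ M) →
      Tendsto (fun γ => ∫ u, g u ∂(νγ γ)) (nhdsWithin 0 (Set.Ioi 0))
        (𝓝 (∫ u, g u ∂ν)) := by
  rintro g hg ⟨M, hM⟩
  subst hB hν
  have hy : ∀ j, y j ≠ 0 := by
    obtain ⟨u, hu⟩ := nonempty_of_measure_ne_zero hBpos.ne'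
    exact fun j hj => by simpa [hj] using hu j
  have hae : ∀ᵐ u ∂ν₀, ∀ j, y j * u (x j) ≠ 0 := by
    simpa [ae_iff, hy] using hzero
  have hBmeas : MeasurableSet {u : C(Ω, ℝ) | ∀ j, y j * u (x j) > 0} := by
    simp only [Set.ofPred_forall]
    exact .iInter fun j => measurableSet_lt measurable_const (Continuous.measurable (by fun_prop))
  refine (tendsto_integral_normalized_withDensity hBmeas hBpos.ne'
    (fun γ => (measurable_exp_neg_probitMisfit γ).aestronglyMeasurable)
    (fun _ _ => (Real.exp_pos _).le) exp_neg_probitMisfit_le_one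
    (hae.mono fun _ => tendsto_exp_neg_probitMisfit) hg.aestronglyMeasurable hM).congr' ?_
  filter_upwards [self_mem_nhdsWithin] with γ hγ
  rw [hνγ γ hγ]

/-- Small noise limit of the probit posterior: `ν_γ^p ⇒ ν₀(·|B)` as `γ → 0⁺`,
where `B = {u : y_j u(x_j) > 0 ∀ j}`. Weak convergence is expressed as convergence of
integrals of all bounded continuous functionals. -/
theorem probit_small_noise_limit
    {Ω : Type*} [TopologicalSpace Ω]
    [MeasurableSpace C(Ω, ℝ)] [BorelSpace C(Ω, ℝ)]
    (ν₀ : Measure C(Ω, ℝ)) [IsProbabilityMeasure ν₀]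
    (m : ℕ) (x : Fin m → Ω) (y : Fin m → ℝ)
    (hy : ∀ j, y j = 1 ∨ y j = -1)
    (hzero : ν₀ {u : C(Ω, ℝ) | ∃ j, u (x j) = 0} = 0)
    (B : Set C(Ω, ℝ)) (hB : B = {u : C(Ω, ℝ) | ∀ j, y j * u (x j) > 0})
    (hBpos : 0 < ν₀ B)
    (νγ : ℝ → Measure C(Ω, ℝ))
    (hνγ : ∀ γ : ℝ, 0 < γ →
      νγ γ = (ENNReal.ofReal (∫ u, Real.exp (-(probitMisfit x y γ u)) ∂ν₀))⁻¹ •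
        ν₀.withDensity (fun u => ENNReal.ofReal (Real.exp (-(probitMisfit x y γ u)))))
    (ν : Measure C(Ω, ℝ)) (hν : ν = (ν₀ B)⁻¹ • ν₀.restrict B) :
    ∀ g : C(Ω, ℝ) → ℝ, Continuous g → (∃ M, ∀ u, |g u| ≤ M) →
      Tendsto (fun γ => ∫ u, g u ∂(νγ γ)) (nhdsWithin 0 (Set.Ioi 0))
        (𝓝 (∫ u, g u ∂ν)) :=
  probit_small_noise_limit_general ν₀ m x y hzero B hB hBpos νγ hνγ ν hν
end
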